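/- Suppose k ≥ 2 and β is a binary sequence of length k which begins with 1 and contains at least one 0. Then for all n ≥ 0, the number of ascent sequences of length n which avoid both the pattern 012 and the sequence β is |A_n(012, β)| = Σ_{j=0}^{k−1} C(n−1, j), where C(n−1,j) is the binomial coefficient. -/

import Mathlib

/-- Two lists of naturals have the same length and the same relative order
(including ties). -/
def SameRelOrder (u v : List ℕ) : Prop :=
  u.length = v.length ∧
    ∀ i j, i < u.length → j < u.length →
      (u.getD i 0 < u.getD j 0 ↔ v.getD i 0 < v.getD j 0)

/-- `α` contains `β` as a pattern: some subsequence of `α` has the same length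
and relative order as `β`. -/
def SeqContains (α β : List ℕ) : Prop :=
  ∃ γ : List ℕ, γ.Sublist α ∧ SameRelOrder γ β

/-- A copy of the Fishburn pattern `f` in `l`: indices `j`, `k` with `j + 1 < k`,
`l j = l k + 1` and `l (j+1) > l j`. -/
def HasFishburnCopy (l : List ℕ) : Prop :=
  ∃ j k, j + 1 < k ∧ k < l.length ∧
    l.getD j 0 = l.getD k 0 + 1 ∧ l.getD j 0 < l.getD (j + 1) 0

/-- A Fishburn permutation contains no copy of the Fishburn pattern `f`. -/
def FishburnFree (l : List ℕ) : Prop := ¬ HasFishburnCopy l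

/-- `l` is a permutation of `1, …, n`, written in one-line notation. -/
def IsPermList (n : ℕ) (l : List ℕ) : Prop := l.Perm (List.range' 1 n)

/-- The set of Fishburn permutations of length `n` avoiding each pattern in `pats`. -/
def FishburnSet (n : ℕ) (pats : List (List ℕ)) : Set (List ℕ) :=
  {l | IsPermList n l ∧ FishburnFree l ∧ ∀ p ∈ pats, ¬ SeqContains l p}

/-- The set of all permutations of length `n` avoiding each pattern in `pats`. -/
def PermSet (n : ℕ) (pats : List (List ℕ)) : Set (List ℕ) :=
  {l | IsPermList n l ∧ ∀ p ∈ pats, ¬ SeqContains l p}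

/-- The number of ascents of a sequence. -/
def ascCount (l : List ℕ) : ℕ :=
  ((Finset.range l.length).filter
    (fun i => i + 1 < l.length ∧ l.getD i 0 < l.getD (i + 1) 0)).card

/-- `l` is an ascent sequence. -/
def IsAscentSeq (l : List ℕ) : Prop :=
  (0 < l.length → l.getD 0 0 = 0) ∧
    ∀ j, 0 < j → j < l.length → l.getD j 0 ≤ 1 + ascCount (l.take j)

/-- The set of ascent sequences of length `n` avoiding each pattern in `pats`. -/
def AscentSeqSet (n : ℕ) (pats : List (List ℕ)) : Set (List ℕ) :=
  {l | l.length = n ∧ IsAscentSeq l ∧ ∀ p ∈ pats, ¬ SeqContains l p}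

/-- `l` is a binary sequence: every entry is `0` or `1`. -/
def IsBinarySeq (l : List ℕ) : Prop := ∀ x ∈ l, x = 0 ∨ x = 1

open scoped List
open Finset

/-!
An ascent sequence avoiding `012` only takes the values `0` and `1`: the first entry `≥ 2`
needs an earlier ascent, which in a `0/1` prefix is a `0` followed by a `1`. Conversely every
`0/1` word starting with `0` is an ascent sequence avoiding `012`. In a `0/1` word, an occurrence
of a pattern using both letters must send `0 ↦ 0` and `1 ↦ 1`, so it is a subsequence equal to
`β`; as `β` starts with `1`, the leading `0` plays no role. Hence `A_n(012, β)` is in bijection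
with the `0/1` words of length `n - 1` not containing `β` as a subsequence. Writing `f(m, δ)`
for the number of `0/1` words of length `m` avoiding `δ` as a subsequence, splitting by the first
letter gives `f(m + 1, cδ) = f(m, δ) + f(m, cδ)`, the Pascal recursion of `∑_{j < |δ|} C(m, j)`,
whatever the letters of `δ` are.
-/

theorem List.getElem_cons_sublist_drop {α : Type*} {l s : List α} {i : ℕ} (hi : i < l.length)
    (hs : s <+ l.drop (i + 1)) : l[i] :: s <+ l.drop i := by
  rw [← List.getElem_cons_drop hi]
  exact hs.cons_cons _

theorem seqContains_of_sublist {α β : List ℕ} (h : β <+ α) : SeqContains α β :=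
  ⟨β, h, rfl, fun _ _ _ _ => Iff.rfl⟩

theorem seqContains_012_of_sublist {l : List ℕ} {a b c : ℕ} (h : [a, b, c] <+ l)
    (hab : a < b) (hbc : b < c) : SeqContains l [0, 1, 2] := by
  refine ⟨[a, b, c], h, rfl, fun i j hi hj => ?_⟩
  simp only [List.length_cons, List.length_nil] at hi hj
  interval_cases i <;> interval_cases j <;> simp <;> omega

theorem isBinarySeq_cons_iff {a : ℕ} {t : List ℕ} :
    IsBinarySeq (a :: t) ↔ (a = 0 ∨ a = 1) ∧ IsBinarySeq t :=
  List.forall_mem_cons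

theorem IsBinarySeq.le_one {l : List ℕ} (hl : IsBinarySeq l) {x : ℕ} (hx : x ∈ l) :
    x ≤ 1 := by
  rcases hl x hx with rfl | rfl <;> simp

theorem IsBinarySeq.getD_le_one {l : List ℕ} (hl : IsBinarySeq l) (i : ℕ) :
    l.getD i 0 ≤ 1 := by
  rcases lt_or_ge i l.length with h | h
  · rw [List.getD_eq_getElem _ _ h]
    exact hl.le_one (List.getElem_mem h)
  · rw [List.getD_eq_default _ _ h]
    exact zero_le_one

theorem IsBinarySeq.not_seqContains_012 {l : List ℕ} (hl : IsBinarySeq l) :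
    ¬ SeqContains l [0, 1, 2] := by
  rintro ⟨γ, hγ, hlen, hord⟩
  have hγ : IsBinarySeq γ := fun x hx => hl x (hγ.subset hx)
  simp only [List.length_cons, List.length_nil] at hlen
  have h01 := (hord 0 1 (by omega) (by omega)).mpr (by simp)
  have h12 := (hord 1 2 (by omega) (by omega)).mpr (by simp)
  have := hγ.getD_le_one 2
  omega

theorem IsBinarySeq.seqContains_iff_sublist {α β : List ℕ} (hα : IsBinarySeq α)
    (hβ : IsBinarySeq β) (h0 : 0 ∈ β) (h1 : 1 ∈ β) : SeqContains α β ↔ β <+ α := by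
  refine ⟨?_, seqContains_of_sublist⟩
  rintro ⟨γ, hγα, hlen, hord⟩
  have hγ : IsBinarySeq γ := fun x hx => hα x (hγα.subset hx)
  obtain ⟨p, hp, hβp⟩ := List.mem_iff_getElem.mp h0
  obtain ⟨q, hq, hβq⟩ := List.mem_iff_getElem.mp h1
  have hγpq : γ.getD p 0 < γ.getD q 0 := by
    rw [hord p q (by omega) (by omega), List.getD_eq_getElem _ _ hp,
      List.getD_eq_getElem _ _ hq, hβp, hβq]
    exact zero_lt_one
  have hγp := hγ.getD_le_one p
  have hγq := hγ.getD_le_one q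
  suffices γ = β by rwa [← this]
  refine List.ext_getElem (by omega) fun m hmγ hmβ => ?_
  have hγm := hγ.getD_le_one m
  rw [← List.getD_eq_getElem γ 0 hmγ, ← List.getD_eq_getElem β 0 hmβ]
  have hord_p := hord p m (by omega) hmγ
  have hord_q := hord m q hmγ (by omega)
  rw [List.getD_eq_getElem β 0 hp, hβp] at hord_p
  rw [List.getD_eq_getElem β 0 hq, hβq] at hord_q
  rcases hβ _ (List.getElem_mem hmβ) with h | h <;>
    rw [List.getD_eq_getElem β 0 hmβ, h] at hord_p hord_q ⊢ <;>
    simp only [lt_self_iff_false, zero_lt_one, iff_true, iff_false, not_lt] at hord_p hord_q <;>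
    omega

theorem exists_sublist_pair_lt_of_ascCount_pos {l : List ℕ} (h : 0 < ascCount l) :
    ∃ a b, a < b ∧ [a, b] <+ l := by
  obtain ⟨i, hi⟩ := Finset.card_pos.mp h
  simp only [Finset.mem_filter, Finset.mem_range] at hi
  obtain ⟨-, hi1, hlt⟩ := hi
  rw [List.getD_eq_getElem _ _ (by omega), List.getD_eq_getElem _ _ hi1] at hlt
  refine ⟨_, _, hlt,
    (List.getElem_cons_sublist_drop (by omega) ?_).trans (List.drop_sublist _ _)⟩
  exact List.getElem_cons_sublist_drop hi1 (List.nil_sublist _)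

theorem IsAscentSeq.isBinarySeq {l : List ℕ} (hl : IsAscentSeq l)
    (h012 : ¬ SeqContains l [0, 1, 2]) : IsBinarySeq l := by
  by_contra hbin
  have hex : ∃ j, ∃ hj : j < l.length, 1 < l[j] := by
    simp only [IsBinarySeq, not_forall, List.mem_iff_getElem] at hbin
    obtain ⟨_, ⟨j, hj, rfl⟩, hx⟩ := hbin
    exact ⟨j, hj, by omega⟩
  obtain ⟨j, ⟨hj, hlj⟩, hmin⟩ := Nat.findX hex
  have hprefix : IsBinarySeq (l.take j) := by
    intro x hx
    obtain ⟨i, hi, rfl⟩ := List.mem_take_iff_getElem.mp hx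
    have := hmin i (lt_of_lt_of_le hi (min_le_left _ _))
    push Not at this
    have := this (by omega)
    omega
  have hj0 : 0 < j := by
    refine Nat.pos_of_ne_zero fun h0 => ?_
    have := hl.1 (by omega)
    subst h0
    rw [List.getD_eq_getElem _ _ hj] at this
    omega
  have hasc := hl.2 j hj0 hj
  rw [List.getD_eq_getElem _ _ hj] at hasc
  obtain ⟨a, b, hab, hsub⟩ := exists_sublist_pair_lt_of_ascCount_pos (l := l.take j) (by omega)
  have hb := hprefix.le_one (hsub.subset (List.mem_cons_of_mem _ (List.mem_singleton_self b)))
  refine h012 (seqContains_012_of_sublist (c := l[j]) ?_ hab (by omega))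
  simpa using hsub.append (List.getElem_cons_sublist_drop hj (List.nil_sublist _))

theorem IsBinarySeq.isAscentSeq_zero_cons {t : List ℕ} (ht : IsBinarySeq t) :
    IsAscentSeq (0 :: t) := by
  have h0t : IsBinarySeq (0 :: t) := isBinarySeq_cons_iff.mpr ⟨Or.inl rfl, ht⟩
  exact ⟨fun _ => rfl, fun j _ _ => (h0t.getD_le_one j).trans (Nat.le_add_right _ _)⟩

def binaryWords : ℕ → Finset (List ℕ)
  | 0 => {[]}
  | m + 1 => (binaryWords m).image (List.cons 0) ∪ (binaryWords m).image (List.cons 1)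

theorem mem_binaryWords {m : ℕ} {t : List ℕ} :
    t ∈ binaryWords m ↔ t.length = m ∧ IsBinarySeq t := by
  induction m generalizing t with
  | zero => simp +contextual [binaryWords, IsBinarySeq]
  | succ m ih =>
    cases t with
    | nil => simp [binaryWords]
    | cons a t =>
      simp only [binaryWords, mem_union, mem_image, ih, IsBinarySeq, List.cons.injEq,
        exists_eq_right_right, List.length_cons, Nat.add_right_cancel_iff, List.mem_cons,
        forall_eq_or_imp]
      tauto

theorem cons_sublist_cons_iff_ite {c b : ℕ} {δ t : List ℕ} :
    c :: δ <+ b :: t ↔ (if b = c then δ else c :: δ) <+ t := by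
  split_ifs with h
  · rw [h, List.cons_sublist_cons]
  · rw [List.cons_sublist_cons']
    exact or_iff_left fun h' => h h'.1.symm

theorem card_filter_not_sublist_image_cons (s : Finset (List ℕ)) (b c : ℕ) (δ : List ℕ) :
    #{t ∈ s.image (List.cons b) | ¬ c :: δ <+ t} =
      #{t ∈ s | ¬ (if b = c then δ else c :: δ) <+ t} := by
  rw [Finset.filter_image, Finset.card_image_of_injective _ List.cons_injective]
  simp only [cons_sublist_cons_iff_ite]

theorem card_binaryWords_succ_filter_not_cons_sublist (m c : ℕ) (hc : c = 0 ∨ c = 1)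
    (δ : List ℕ) :
    #{t ∈ binaryWords (m + 1) | ¬ c :: δ <+ t} =
      #{t ∈ binaryWords m | ¬ δ <+ t} + #{t ∈ binaryWords m | ¬ c :: δ <+ t} := by
  have hdisj : Disjoint ((binaryWords m).image (List.cons 0))
      ((binaryWords m).image (List.cons 1)) := by
    simp [Finset.disjoint_left]
  rw [binaryWords, Finset.filter_union, Finset.card_union_of_disjoint
    (Finset.disjoint_filter_filter hdisj), card_filter_not_sublist_image_cons,
    card_filter_not_sublist_image_cons]
  rcases hc with rfl | rfl <;> simp [add_comm]

theorem sum_range_succ_choose_succ (m r : ℕ) :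
    ∑ j ∈ range (r + 1), (m + 1).choose j =
      ∑ j ∈ range r, m.choose j + ∑ j ∈ range (r + 1), m.choose j := by
  rw [sum_range_succ', sum_range_succ' (fun j => m.choose j)]
  simp only [Nat.choose_succ_succ', sum_add_distrib, Nat.choose_zero_right]
  ring

theorem card_binaryWords_filter_not_sublist (m : ℕ) {δ : List ℕ} (hδ : IsBinarySeq δ) :
    #{t ∈ binaryWords m | ¬ δ <+ t} = ∑ j ∈ range δ.length, m.choose j := by
  induction m generalizing δ with
  | zero =>
    cases δ with
    | nil => simp
    | cons c δ => simp [binaryWords, sum_range_succ', Finset.filter_singleton]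
  | succ m ih =>
    cases δ with
    | nil => simp
    | cons c δ =>
      obtain ⟨hc, hδ'⟩ := isBinarySeq_cons_iff.mp hδ
      rw [card_binaryWords_succ_filter_not_cons_sublist m c hc, ih hδ', ih hδ, List.length_cons,
        sum_range_succ_choose_succ]

theorem ascentSeqSet_zero {pats : List (List ℕ)} (hpats : ∀ p ∈ pats, p ≠ []) :
    AscentSeqSet 0 pats = {[]} := by
  ext l
  simp only [AscentSeqSet, Set.mem_ofPred_eq, Set.mem_singleton_iff, List.length_eq_zero_iff]
  refine ⟨fun h => h.1, ?_⟩
  rintro rfl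
  refine ⟨rfl, ⟨by simp, by simp⟩, fun p hp ⟨γ, hγ, hlen, _⟩ => hpats p hp ?_⟩
  rw [List.sublist_nil.mp hγ] at hlen
  exact List.length_eq_zero_iff.mp hlen.symm

theorem ascentSeqSet_succ_012 (m : ℕ) {β : List ℕ} (hβ : IsBinarySeq (1 :: β))
    (h0 : 0 ∈ β) :
    AscentSeqSet (m + 1) [[0, 1, 2], 1 :: β] =
      ({t ∈ binaryWords m | ¬ 1 :: β <+ t}.image (List.cons 0) : Finset (List ℕ)) := by
  have hsub : ∀ t, 1 :: β <+ 0 :: t ↔ 1 :: β <+ t := fun t => by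
    simpa using cons_sublist_cons_iff_ite (b := 0) (c := 1) (δ := β) (t := t)
  ext l
  simp only [AscentSeqSet, List.mem_cons, List.not_mem_nil, or_false, forall_eq_or_imp,
    forall_eq, Set.mem_ofPred_eq, coe_image, coe_filter, Set.mem_image, mem_binaryWords]
  constructor
  · rintro ⟨hlen, hasc, h012, hβl⟩
    have hl := hasc.isBinarySeq h012
    rw [hl.seqContains_iff_sublist hβ (List.mem_cons_of_mem 1 h0) List.mem_cons_self] at hβl
    obtain ⟨a, t, rfl⟩ := List.exists_cons_of_length_eq_add_one hlen
    obtain rfl : a = 0 := by simpa using hasc.1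
    refine ⟨t, ⟨⟨by simpa using hlen, (isBinarySeq_cons_iff.mp hl).2⟩, ?_⟩, rfl⟩
    rwa [← hsub]
  · rintro ⟨t, ⟨⟨hlen, ht⟩, hβt⟩, rfl⟩
    have h0t : IsBinarySeq (0 :: t) := isBinarySeq_cons_iff.mpr ⟨Or.inl rfl, ht⟩
    refine ⟨by simpa using hlen, ht.isAscentSeq_zero_cons, h0t.not_seqContains_012, ?_⟩
    rwa [h0t.seqContains_iff_sublist hβ (List.mem_cons_of_mem 1 h0) List.mem_cons_self, hsub]

theorem stmt8 (k : ℕ) (β : List ℕ) (hβ : IsBinarySeq β)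
    (hlen : β.length = k) (hhead : β.getD 0 0 = 1) (hzero : 0 ∈ β) (n : ℕ) :
    (AscentSeqSet n [[0, 1, 2], β]).ncard =
      ∑ j ∈ Finset.range k, (n - 1).choose j := by
  obtain ⟨β, rfl⟩ : ∃ β', β = 1 :: β' := by
    cases β with
    | nil => simp at hzero
    | cons b β => exact ⟨β, by simpa using hhead⟩
  subst hlen
  cases n with
  | zero =>
    rw [ascentSeqSet_zero (by simp), Set.ncard_singleton]
    simp [sum_range_succ']
  | succ m =>
    have h0 : 0 ∈ β := by simpa using hzero
    rw [ascentSeqSet_succ_012 m hβ h0, Set.ncard_coe_finset,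
      card_image_of_injective _ List.cons_injective, card_binaryWords_filter_not_sublist m hβ,
      Nat.add_sub_cancel]
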